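/- arXiv:1409.3659 — 5 statements merged into one kernel-verified Lean document; each statement's English description precedes it below -/
import Mathlib

section
/- Let k be a positive integer and let G=(V,E) be a finite simple graph with minimum degree at least 2k+1. Then G has an edge-colouring f:E→{1,2} such that every vertex is incident with at least k edges of colour 1 and at least k edges of colour 2. -/
/-!
Colour the edges of a longest trail alternately. A longest trail cannot be extended, so every
edge at either of its ends lies on it; after deleting its edges both ends are isolated. The
alternating colouring contributes nothing at the interior passages of the trail and a single
`±1` at each end (at most `±2` if the trail is closed). By induction on the number of edges,
every loopless graph therefore has a 2-colouring of its edges in which the two colour counts at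
each vertex differ by at most 2, and at a vertex of degree at least `2k+1` each colour then
occurs at least `k` times.
-/

open Finset SimpleGraph

def boolSign (b : Bool) : ℤ := if b then 1 else -1

@[simp] lemma boolSign_not (b : Bool) : boolSign (!b) = -boolSign b := by
  cases b <;> rfl

namespace SimpleGraph

variable {V : Type*}

section LongestTrail

variable {G : SimpleGraph V}

theorem Walk.mk_mem_edges_of_forall_isTrail_length_le {u v x : V} {p : G.Walk u v}
    (hp : p.IsTrail)
    (hmax : ∀ (u' v' : V) (p' : G.Walk u' v'), p'.IsTrail → p'.length ≤ p.length)
    (h : G.Adj u x) : s(u, x) ∈ p.edges := by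
  by_contra hx
  have := hmax _ _ (.cons h.symm p) (hp.cons h.symm (by rwa [Sym2.eq_swap]))
  simp at this

theorem exists_isTrail_edges_ne_nil_forall_incident_mem_edges [Finite G.edgeSet]
    (hG : G.edgeSet.Nonempty) :
    ∃ (a b : V) (p : G.Walk a b), p.IsTrail ∧ p.edges ≠ [] ∧
      ∀ e ∈ G.edgeSet, a ∈ e ∨ b ∈ e → e ∈ p.edges := by
  obtain ⟨e, he⟩ := hG
  induction e using Sym2.ind with | h x y =>
  rw [mem_edgeSet] at he
  have : Nonempty V := ⟨x⟩
  obtain ⟨a, b, p, hp, hmax⟩ := Walk.exists_isTrail_forall_isTrail_length_le_length G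
  refine ⟨a, b, p, hp, ?_, ?_⟩
  · have hlen : 1 ≤ p.length := hmax _ _ (.cons he .nil) (by simp)
    rwa [← List.length_pos_iff, Walk.length_edges]
  · rintro e he' (ha | hb)
    · obtain ⟨z, rfl⟩ := Sym2.mem_iff_exists.mp ha
      exact Walk.mk_mem_edges_of_forall_isTrail_length_le hp hmax he'
    · obtain ⟨z, rfl⟩ := Sym2.mem_iff_exists.mp hb
      simpa using Walk.mk_mem_edges_of_forall_isTrail_length_le hp.reverse
        (by simpa using hmax) he'

end LongestTrail

section Imbalance

variable [DecidableEq V]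

def imbalance (E : Finset (Sym2 V)) (g : Sym2 V → Bool) (w : V) : ℤ :=
  ∑ e ∈ E with w ∈ e, boolSign (g e)

@[simp] lemma imbalance_empty (g : Sym2 V → Bool) (w : V) : imbalance ∅ g w = 0 := by
  simp [imbalance]

lemma imbalance_eq_zero {E : Finset (Sym2 V)} {w : V} (h : ∀ e ∈ E, w ∉ e)
    (g : Sym2 V → Bool) :
    imbalance E g w = 0 := by
  rw [imbalance, filter_false_of_mem h, sum_empty]

lemma imbalance_insert {E : Finset (Sym2 V)} {e : Sym2 V} (he : e ∉ E) (g : Sym2 V → Bool)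
    (w : V) :
    imbalance (insert e E) g w = (if w ∈ e then boolSign (g e) else 0) + imbalance E g w := by
  unfold imbalance
  rw [filter_insert]
  split_ifs with hw
  · exact sum_insert fun h => he (mem_filter.mp h).1
  · rw [zero_add]

lemma imbalance_congr {E : Finset (Sym2 V)} {g g' : Sym2 V → Bool} {w : V}
    (h : ∀ e ∈ E, w ∈ e → g e = g' e) : imbalance E g w = imbalance E g' w :=
  sum_congr rfl fun e he => by rw [mem_filter] at he; rw [h e he.1 he.2]

lemma imbalance_piecewise {E F : Finset (Sym2 V)} (hF : F ⊆ E) (g₁ g₀ : Sym2 V → Bool)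
    (w : V) :
    imbalance E (F.piecewise g₁ g₀) w = imbalance F g₁ w + imbalance (E \ F) g₀ w := by
  conv_lhs => rw [← union_sdiff_of_subset hF, imbalance, filter_union,
    sum_union (disjoint_filter_filter disjoint_sdiff)]
  congr 1 <;> refine sum_congr rfl fun e he => ?_
  · rw [piecewise_eq_of_mem _ _ _ (mem_filter.mp he).1]
  · rw [piecewise_eq_of_notMem _ _ _ (mem_sdiff.mp (mem_filter.mp he).1).2]

lemma imbalance_edgeFinset (G : SimpleGraph V) [Fintype G.edgeSet] (g : Sym2 V → Bool) (v : V)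
    [Fintype (G.neighborSet v)] :
    imbalance G.edgeFinset g v =
      #{e ∈ G.incidenceFinset v | g e = true} - #{e ∈ G.incidenceFinset v | g e = false} := by
  rw [imbalance, ← incidenceFinset_eq_filter]
  unfold boolSign
  rw [sum_ite]
  simp [sub_eq_add_neg]

theorem Walk.IsTrail.exists_imbalance_edges_eq {G : SimpleGraph V} {a b : V} {p : G.Walk a b}
    (hp : p.IsTrail) (c : Bool) :
    ∃ g c', ∀ w, imbalance p.edges.toFinset g w =
      (if w = a then boolSign c else 0) + (if w = b then boolSign c' else 0) := by
  induction p generalizing c with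
  | nil => exact ⟨fun _ => c, !c, fun w => by split_ifs <;> simp⟩
  | @cons u a' b h q ih =>
    rw [isTrail_cons] at hp
    obtain ⟨g, c', hg⟩ := ih hp.1 (!c)
    refine ⟨Function.update g s(u, a') c, c', fun w => ?_⟩
    have hq : ∀ e ∈ q.edges.toFinset, w ∈ e → Function.update g s(u, a') c e = g e :=
      fun e he _ => Function.update_of_ne
        (by rintro rfl; exact hp.2 (List.mem_toFinset.mp he)) _ _
    rw [edges_cons, List.toFinset_cons, imbalance_insert (by simpa using hp.2),
      imbalance_congr hq, hg, Function.update_self]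
    have := h.ne
    by_cases hwu : w = u <;> by_cases hwa : w = a' <;> simp_all

theorem exists_abs_imbalance_le_two (E : Finset (Sym2 V)) (hE : ∀ e ∈ E, ¬e.IsDiag) :
    ∃ g : Sym2 V → Bool, ∀ w, |imbalance E g w| ≤ 2 := by
  induction E using Finset.strongInduction with
  | H E ih =>
  rcases E.eq_empty_or_nonempty with rfl | ⟨e₀, he₀⟩
  · exact ⟨fun _ => true, by simp⟩
  have hedges : ∀ e ∈ E, e ∈ (fromEdgeSet (E : Set (Sym2 V))).edgeSet := fun e he =>
    (edgeSet_fromEdgeSet _).symm ▸ ⟨he, hE e he⟩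
  obtain ⟨a, b, p, hp, hne, hends⟩ :=
    exists_isTrail_edges_ne_nil_forall_incident_mem_edges ⟨e₀, hedges e₀ he₀⟩
  set F := p.edges.toFinset
  have hFE : F ⊆ E := fun e he =>
    (edgeSet_fromEdgeSet _ ▸ p.edges_subset_edgeSet (List.mem_toFinset.mp he)).1
  have hrest : ∀ e ∈ E \ F, a ∉ e ∧ b ∉ e := fun e he => by
    rw [mem_sdiff, List.mem_toFinset] at he
    exact ⟨fun ha => he.2 (hends e (hedges e he.1) (.inl ha)),
      fun hb => he.2 (hends e (hedges e he.1) (.inr hb))⟩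
  have hF : F.Nonempty := (List.toFinset_nonempty_iff _).mpr hne
  obtain ⟨g₀, hg₀⟩ := ih (E \ F) (sdiff_ssubset hFE hF) fun e he => hE e (mem_sdiff.mp he).1
  obtain ⟨g₁, c', hg₁⟩ := hp.exists_imbalance_edges_eq true
  refine ⟨F.piecewise g₁ g₀, fun w => ?_⟩
  rw [imbalance_piecewise hFE, hg₁]
  by_cases hw : w = a ∨ w = b
  · rw [imbalance_eq_zero fun e he => by rcases hw with rfl | rfl <;> simp [hrest e he]]
    split_ifs <;> cases c' <;> simp [boolSign]
  · rw [not_or] at hw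
    simpa [hw.1, hw.2] using hg₀ w

end Imbalance

end SimpleGraph

theorem statement2_general (k : ℕ) {V : Type*} [Fintype V] [DecidableEq V]
    (G : SimpleGraph V) [DecidableRel G.Adj]
    (hdeg : ∀ v : V, 2 * k + 1 ≤ G.degree v) :
    ∃ f : Sym2 V → ℕ,
      (∀ e ∈ G.edgeFinset, f e = 1 ∨ f e = 2) ∧
      (∀ v : V, k ≤ ((G.incidenceFinset v).filter (fun e => f e = 1)).card) ∧
      (∀ v : V, k ≤ ((G.incidenceFinset v).filter (fun e => f e = 2)).card) := by
  obtain ⟨g, hg⟩ := exists_abs_imbalance_le_two G.edgeFinset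
    fun e he => G.not_isDiag_of_mem_edgeSet (mem_edgeFinset.mp he)
  have hcount : ∀ v, #{e ∈ G.incidenceFinset v | g e = true} +
      #{e ∈ G.incidenceFinset v | g e = false} = G.degree v := fun v => by
    simpa using card_filter_add_card_filter_not (s := G.incidenceFinset v) (p := (g · = true))
  refine ⟨fun e => if g e then 1 else 2, fun e _ => by cases g e <;> simp,
    fun v => ?_, fun v => ?_⟩
  all_goals
    have hbal := abs_le.mp (hg v)
    rw [imbalance_edgeFinset] at hbal
    have hsum := hcount v
    have hv := hdeg v
    simp only [ite_eq_left_iff, ite_eq_right_iff, Bool.not_eq_true, Bool.not_eq_false,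
      OfNat.ofNat_ne_one, OfNat.one_ne_ofNat, imp_false]
    omega

/-- A graph with minimum degree at least `2k+1` has an edge-colouring with two colours
such that every vertex is incident with at least `k` edges of each colour. -/
theorem statement2 (k : ℕ) (hk : 0 < k) {V : Type*} [Fintype V] [DecidableEq V]
    (G : SimpleGraph V) [DecidableRel G.Adj]
    (hdeg : ∀ v : V, 2 * k + 1 ≤ G.degree v) :
    ∃ f : Sym2 V → ℕ,
      (∀ e ∈ G.edgeFinset, f e = 1 ∨ f e = 2) ∧
      (∀ v : V, k ≤ ((G.incidenceFinset v).filter (fun e => f e = 1)).card) ∧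
      (∀ v : V, k ≤ ((G.incidenceFinset v).filter (fun e => f e = 2)).card) :=
  statement2_general k G hdeg
end

section
/- Let n, r₁ and r₂ be positive integers, and for i=1,2 set pᵢ = √rᵢ/(√r₁+√r₂). Suppose r is a positive integer with r ≤ n(n−1)/2 such that r·pᵢ² − √(r·pᵢ² + 2rn·pᵢ³ − r(2n+1)·pᵢ⁴) ≥ rᵢ holds for i=1 and i=2. Then every finite simple graph G on n vertices with exactly r edges admits a partition of its vertex set V(G)=V₁∪V₂ into two disjoint parts such that at least r₁ edges of G have both endpoints in V₁ and at least r₂ edges of G have both endpoints in V₂. -/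
/-!
Put every vertex into `V₁` independently with probability `p₁`, and into `V₂` otherwise, so with
probability `p₂ = 1 - p₁`. The number `X` of edges inside `V₁` has mean `r p₁²`; an edge is
correlated only with itself and with the at most `2n` edges meeting it, which bounds the variance
by `σ² = r p₁² + 2rn p₁³ - r(2n+1) p₁⁴`. The hypothesis puts `r₁` at least `σ` below the mean,
so by the one-sided Chebyshev inequality `X < r₁` has probability `< 1/2`. The same holds for
`V₂`, and a union bound leaves a bipartition that is good for both parts.
-/

open Finset SimpleGraph

/-- The probability `pᵢ = √rᵢ / (√r₁ + √r₂)` used in the random bipartition. -/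
noncomputable def pratio (r₁ r₂ i : ℕ) : ℝ :=
  Real.sqrt i / (Real.sqrt r₁ + Real.sqrt r₂)

section WeightedSums

variable {α : Type*} [Fintype α] {w f : α → ℝ} {m : ℝ}

lemma sum_mul_sub_sq_eq (hw : ∑ a, w a = 1) (hm : ∑ a, w a * f a = m) :
    ∑ a, w a * (f a - m) ^ 2 = ∑ a, w a * f a ^ 2 - m ^ 2 := by
  have h : ∀ a, w a * (f a - m) ^ 2 = w a * f a ^ 2 - 2 * m * (w a * f a) + m ^ 2 * w a :=
    fun a ↦ by ring
  simp only [h, sum_add_distrib, sum_sub_distrib, ← mul_sum, hw, hm]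
  ring

/-- A one-sided Chebyshev bound: the left tail beyond `t` has weight `≤ (σ² + t²) / 4t²`, which
is `< 1/2` once `σ² < t²`. -/
lemma sum_filter_lt_half_of_sum_mul_sub_sq_lt (hw0 : ∀ a, 0 ≤ w a) (hw : ∑ a, w a = 1)
    (hm : ∑ a, w a * f a = m) {t : ℝ} (ht : 0 < t) (hvar : ∑ a, w a * (f a - m) ^ 2 < t ^ 2)
    (P : α → Prop) [DecidablePred P] (hP : ∀ a, P a → f a ≤ m - t) :
    ∑ a with P a, w a < 1 / 2 := by
  have hpoint : ∀ a, (if P a then w a else 0) ≤ w a * (m - f a + t) ^ 2 / (2 * t) ^ 2 := by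
    intro a
    split_ifs with ha
    · rw [le_div_iff₀ (by positivity)]
      have : 2 * t ≤ m - f a + t := by linarith [hP a ha]
      exact mul_le_mul_of_nonneg_left (pow_le_pow_left₀ (by positivity) this 2) (hw0 a)
    · exact div_nonneg (mul_nonneg (hw0 a) (sq_nonneg _)) (sq_nonneg _)
  have hcentered : ∑ a, w a * (f a - m) = 0 := by
    simp only [mul_sub, sum_sub_distrib, hm, ← sum_mul, hw]; ring
  have hsecond : ∑ a, w a * (m - f a + t) ^ 2 = ∑ a, w a * (f a - m) ^ 2 + t ^ 2 := by
    have h : ∀ a, w a * (m - f a + t) ^ 2 = w a * (f a - m) ^ 2 - 2 * t * (w a * (f a - m))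
        + t ^ 2 * w a := fun a ↦ by ring
    simp only [h, sum_add_distrib, sum_sub_distrib, ← mul_sum, hcentered, hw]
    ring
  calc ∑ a with P a, w a = ∑ a, if P a then w a else 0 := sum_filter _ _
    _ ≤ ∑ a, w a * (m - f a + t) ^ 2 / (2 * t) ^ 2 := sum_le_sum fun a _ ↦ hpoint a
    _ = (∑ a, w a * (f a - m) ^ 2 + t ^ 2) / (2 * t) ^ 2 := by rw [← sum_div, hsecond]
    _ < 1 / 2 := by rw [div_lt_iff₀ (by positivity)]; nlinarith

lemma exists_not_and_not_of_sum_filter_add_lt (hw0 : ∀ a, 0 ≤ w a) (P Q : α → Prop)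
    [DecidablePred P] [DecidablePred Q] (h : ∑ a with P a, w a + ∑ a with Q a, w a < ∑ a, w a) :
    ∃ a, ¬P a ∧ ¬Q a := by
  by_contra! hcover
  refine h.not_ge ?_
  rw [sum_filter, sum_filter, ← sum_add_distrib]
  refine sum_le_sum fun a _ ↦ ?_
  by_cases ha : P a
  · simp only [ha, if_true]; split_ifs <;> linarith [hw0 a]
  · simp [ha, hcover a ha]

end WeightedSums

section BernoulliWeight

variable {V : Type*} [Fintype V] [DecidableEq V]

/-- The probability that a random subset of `V`, containing each vertex independently with
probability `p`, equals `A`. -/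
noncomputable def bernoulliWeight (p : ℝ) (A : Finset V) : ℝ := p ^ #A * (1 - p) ^ #Aᶜ

lemma bernoulliWeight_nonneg {p : ℝ} (hp0 : 0 ≤ p) (hp1 : p ≤ 1) (A : Finset V) :
    0 ≤ bernoulliWeight p A :=
  mul_nonneg (pow_nonneg hp0 _) (pow_nonneg (sub_nonneg.2 hp1) _)

lemma bernoulliWeight_compl (p : ℝ) (A : Finset V) :
    bernoulliWeight p Aᶜ = bernoulliWeight (1 - p) A := by
  rw [bernoulliWeight, bernoulliWeight, compl_compl, sub_sub_cancel, mul_comm]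

lemma sum_bernoulliWeight_filter_subset (p : ℝ) (T : Finset V) :
    ∑ A with T ⊆ A, bernoulliWeight p A = p ^ #T := by
  have hsupersets : ({A | T ⊆ A} : Finset (Finset V)) = Tᶜ.powerset.image (T ∪ ·) := by
    rw [compl_eq_univ_sdiff, ← Icc_eq_image_powerset (subset_univ T)]
    ext A; simp
  have hinj : Set.InjOn (T ∪ ·) (Tᶜ.powerset : Set (Finset V)) := fun B hB C hC hBC ↦ by
    rw [mem_coe, mem_powerset, subset_compl_iff_disjoint_left] at hB hC
    rw [← union_sdiff_cancel_left hB, ← union_sdiff_cancel_left hC]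
    exact congrArg (· \ T) hBC
  rw [hsupersets, sum_image hinj]
  calc ∑ B ∈ Tᶜ.powerset, bernoulliWeight p (T ∪ B)
      = ∑ B ∈ Tᶜ.powerset, p ^ #T * (p ^ #B * (1 - p) ^ (#Tᶜ - #B)) := by
        refine sum_congr rfl fun B hB ↦ ?_
        have hdisj : Disjoint T B := subset_compl_iff_disjoint_left.1 (mem_powerset.1 hB)
        rw [bernoulliWeight, card_union_of_disjoint hdisj, compl_union, ← sdiff_eq_inter_compl,
          card_sdiff_of_subset (mem_powerset.1 hB), pow_add, mul_assoc]
    _ = p ^ #T := by rw [← mul_sum, sum_pow_mul_eq_add_pow, add_sub_cancel, one_pow, mul_one]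

lemma sum_bernoulliWeight (p : ℝ) : ∑ A : Finset V, bernoulliWeight p A = 1 := by
  simpa using sum_bernoulliWeight_filter_subset (V := V) p ∅

lemma sum_bernoulliWeight_filter_compl (p : ℝ) (P : Finset V → Prop) [DecidablePred P] :
    ∑ A with P Aᶜ, bernoulliWeight p A = ∑ A with P A, bernoulliWeight (1 - p) A := by
  rw [sum_filter, sum_filter]
  refine Fintype.sum_equiv (Equiv.mk compl compl compl_compl compl_compl) _ _ fun A ↦ ?_
  simp [← bernoulliWeight_compl]

end BernoulliWeight

lemma Sym2.mem_sym2_iff_toFinset_subset {α : Type*} [DecidableEq α] {e : Sym2 α}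
    {A : Finset α} : e ∈ A.sym2 ↔ e.toFinset ⊆ A := by
  simp [mem_sym2_iff, subset_iff]

lemma Sym2.card_toFinset_inter_le_one {α : Type*} [DecidableEq α] {e f : Sym2 α}
    (he : ¬e.IsDiag) (hf : ¬f.IsDiag) (hef : e ≠ f) : #(e.toFinset ∩ f.toFinset) ≤ 1 := by
  by_contra! h
  have he₂ := card_toFinset_of_not_isDiag e he
  have hf₂ := card_toFinset_of_not_isDiag f hf
  have hinter_e := eq_of_subset_of_card_le
    (inter_subset_left : e.toFinset ∩ f.toFinset ⊆ e.toFinset) (by omega)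
  have hinter_f := eq_of_subset_of_card_le
    (inter_subset_right : e.toFinset ∩ f.toFinset ⊆ f.toFinset) (by omega)
  exact hef (Sym2.ext fun x ↦ by rw [← mem_toFinset, ← mem_toFinset, ← hinter_e, hinter_f])

lemma Sym2.card_toFinset_le_two {α : Type*} [DecidableEq α] (e : Sym2 α) : #e.toFinset ≤ 2 := by
  rw [card_toFinset]
  split_ifs <;> omega

lemma Sym2.pow_card_toFinset_union_sub_pow_four_le {α : Type*} [DecidableEq α] {p : ℝ}
    (hp0 : 0 ≤ p) (hp1 : p ≤ 1) {e f : Sym2 α} (he : ¬e.IsDiag) (hf : ¬f.IsDiag) (hef : e ≠ f) :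
    p ^ #(e.toFinset ∪ f.toFinset) - p ^ 4 ≤
      if (e.toFinset ∩ f.toFinset).Nonempty then p ^ 3 - p ^ 4 else 0 := by
  have hcard := card_union_add_card_inter e.toFinset f.toFinset
  have hinter := card_toFinset_inter_le_one he hf hef
  rw [card_toFinset_of_not_isDiag e he, card_toFinset_of_not_isDiag f hf] at hcard
  split_ifs with hmeet
  · have : 3 ≤ #(e.toFinset ∪ f.toFinset) := by have := hmeet.card_pos; omega
    linarith [pow_le_pow_of_le_one hp0 hp1 this]
  · rw [not_nonempty_iff_eq_empty.1 hmeet, card_empty] at hcard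
    rw [show #(e.toFinset ∪ f.toFinset) = 4 by omega, sub_self]

namespace SimpleGraph

variable {V : Type*} [Fintype V] [DecidableEq V] (G : SimpleGraph V) [DecidableRel G.Adj]

def edgesWithin (A : Finset V) : Finset (Sym2 V) := G.edgeFinset.filter (· ∈ A.sym2)

lemma natCast_card_edgesWithin (A : Finset V) :
    (#(G.edgesWithin A) : ℝ) = ∑ e ∈ G.edgeFinset, if e.toFinset ⊆ A then 1 else 0 := by
  simp only [edgesWithin, natCast_card_filter, Sym2.mem_sym2_iff_toFinset_subset]

lemma sum_bernoulliWeight_mul_card_edgesWithin (p : ℝ) :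
    ∑ A, bernoulliWeight p A * #(G.edgesWithin A) = #G.edgeFinset * p ^ 2 := by
  simp_rw [natCast_card_edgesWithin, mul_sum, mul_ite, mul_one, mul_zero]
  rw [sum_comm]
  simp_rw [← sum_filter, sum_bernoulliWeight_filter_subset]
  rw [sum_congr rfl fun e he ↦ by rw [Sym2.card_toFinset_of_not_isDiag e
    (G.not_isDiag_of_mem_edgeSet (mem_edgeFinset.1 he))], sum_const, nsmul_eq_mul]

lemma sum_bernoulliWeight_mul_card_edgesWithin_sq (p : ℝ) :
    ∑ A, bernoulliWeight p A * (#(G.edgesWithin A) : ℝ) ^ 2 =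
      ∑ e ∈ G.edgeFinset, ∑ f ∈ G.edgeFinset, p ^ #(e.toFinset ∪ f.toFinset) := by
  simp_rw [natCast_card_edgesWithin, sq, sum_mul_sum, ite_zero_mul_ite_zero, mul_one,
    ← union_subset_iff, mul_sum, mul_ite, mul_one, mul_zero]
  rw [sum_comm]
  refine sum_congr rfl fun e _ ↦ ?_
  rw [sum_comm]
  simp_rw [← sum_filter, sum_bernoulliWeight_filter_subset]

lemma card_filter_edgeFinset_meets_le (e : Sym2 V) :
    #{f ∈ G.edgeFinset | (e.toFinset ∩ f.toFinset).Nonempty} ≤ 2 * Fintype.card V := by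
  have hsub : {f ∈ G.edgeFinset | (e.toFinset ∩ f.toFinset).Nonempty} ⊆
      e.toFinset.biUnion (G.incidenceFinset ·) := by
    intro f hf
    obtain ⟨hfE, x, hx⟩ := mem_filter.1 hf
    rw [mem_inter, Sym2.mem_toFinset, Sym2.mem_toFinset] at hx
    exact mem_biUnion.2 ⟨x, Sym2.mem_toFinset.2 hx.1,
      (mem_incidenceFinset G x f).2 ⟨mem_edgeFinset.1 hfE, hx.2⟩⟩
  calc _ ≤ #(e.toFinset.biUnion (G.incidenceFinset ·)) := card_le_card hsub
    _ ≤ ∑ x ∈ e.toFinset, G.degree x :=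
        card_biUnion_le.trans_eq (sum_congr rfl fun x _ ↦ G.card_incidenceFinset_eq_degree x)
    _ ≤ #e.toFinset * Fintype.card V :=
        sum_le_card_nsmul _ _ _ fun x _ ↦ (G.degree_lt_card_verts x).le
    _ ≤ 2 * Fintype.card V := Nat.mul_le_mul_right _ e.card_toFinset_le_two

lemma sum_pow_card_toFinset_union_sub_le {p : ℝ} (hp0 : 0 ≤ p) (hp1 : p ≤ 1) {e : Sym2 V}
    (he : e ∈ G.edgeFinset) :
    ∑ f ∈ G.edgeFinset, (p ^ #(e.toFinset ∪ f.toFinset) - p ^ 4) ≤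
      p ^ 2 - p ^ 4 + 2 * Fintype.card V * (p ^ 3 - p ^ 4) := by
  have hdiag {f} (hf : f ∈ G.edgeFinset) : ¬f.IsDiag :=
    G.not_isDiag_of_mem_edgeSet (mem_edgeFinset.1 hf)
  have hp34 : 0 ≤ p ^ 3 - p ^ 4 := by nlinarith [pow_nonneg hp0 3]
  rw [← add_sum_erase _ _ he, union_self, Sym2.card_toFinset_of_not_isDiag e (hdiag he)]
  gcongr _ + ?_
  calc ∑ f ∈ G.edgeFinset.erase e, (p ^ #(e.toFinset ∪ f.toFinset) - p ^ 4)
      ≤ ∑ f ∈ G.edgeFinset.erase e,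
          if (e.toFinset ∩ f.toFinset).Nonempty then p ^ 3 - p ^ 4 else 0 := by
        refine sum_le_sum fun f hf ↦ ?_
        obtain ⟨hfe, hfE⟩ := mem_erase.1 hf
        exact Sym2.pow_card_toFinset_union_sub_pow_four_le hp0 hp1 (hdiag he) (hdiag hfE)
          (Ne.symm hfe)
    _ = #{f ∈ G.edgeFinset.erase e | (e.toFinset ∩ f.toFinset).Nonempty} * (p ^ 3 - p ^ 4) := by
        rw [← sum_filter, sum_const, nsmul_eq_mul]
    _ ≤ 2 * Fintype.card V * (p ^ 3 - p ^ 4) := by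
        refine mul_le_mul_of_nonneg_right ?_ hp34
        exact_mod_cast (card_le_card (filter_subset_filter _ (erase_subset e _))).trans
          (G.card_filter_edgeFinset_meets_le e)

lemma sum_bernoulliWeight_mul_sub_sq_le {p : ℝ} (hp0 : 0 ≤ p) (hp1 : p ≤ 1) :
    ∑ A, bernoulliWeight p A * (#(G.edgesWithin A) - #G.edgeFinset * p ^ 2) ^ 2 ≤
      #G.edgeFinset * p ^ 2 + 2 * #G.edgeFinset * Fintype.card V * p ^ 3 -
        #G.edgeFinset * (2 * Fintype.card V + 1) * p ^ 4 := by
  rw [sum_mul_sub_sq_eq (sum_bernoulliWeight p) (G.sum_bernoulliWeight_mul_card_edgesWithin p),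
    sum_bernoulliWeight_mul_card_edgesWithin_sq]
  calc ∑ e ∈ G.edgeFinset, ∑ f ∈ G.edgeFinset, p ^ #(e.toFinset ∪ f.toFinset)
        - (#G.edgeFinset * p ^ 2) ^ 2
      = ∑ e ∈ G.edgeFinset, ∑ f ∈ G.edgeFinset, (p ^ #(e.toFinset ∪ f.toFinset) - p ^ 4) := by
        simp only [sum_sub_distrib, sum_const, nsmul_eq_mul]
        ring
    _ ≤ ∑ e ∈ G.edgeFinset, (p ^ 2 - p ^ 4 + 2 * Fintype.card V * (p ^ 3 - p ^ 4)) :=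
        sum_le_sum fun e he ↦ G.sum_pow_card_toFinset_union_sub_le hp0 hp1 he
    _ = _ := by
        rw [sum_const, nsmul_eq_mul]
        ring

lemma sum_bernoulliWeight_filter_card_edgesWithin_lt_lt_half {p : ℝ} (hp0 : 0 ≤ p) (hp1 : p ≤ 1)
    {k : ℕ} (hk : (k : ℝ) ≤ #G.edgeFinset * p ^ 2 -
      √(#G.edgeFinset * p ^ 2 + 2 * #G.edgeFinset * Fintype.card V * p ^ 3 -
        #G.edgeFinset * (2 * Fintype.card V + 1) * p ^ 4)) :
    ∑ A with #(G.edgesWithin A) < k, bernoulliWeight p A < 1 / 2 := by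
  set t : ℝ := #G.edgeFinset * p ^ 2 - k + 1
  have ht : √(#G.edgeFinset * p ^ 2 + 2 * #G.edgeFinset * Fintype.card V * p ^ 3 -
      #G.edgeFinset * (2 * Fintype.card V + 1) * p ^ 4) < t := by linarith
  have htpos : 0 < t := (Real.sqrt_nonneg _).trans_lt ht
  refine sum_filter_lt_half_of_sum_mul_sub_sq_lt (bernoulliWeight_nonneg hp0 hp1)
    (sum_bernoulliWeight p) (G.sum_bernoulliWeight_mul_card_edgesWithin p) htpos
    ((G.sum_bernoulliWeight_mul_sub_sq_le hp0 hp1).trans_lt ((Real.sqrt_lt' htpos).1 ht)) _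
    fun A hA ↦ ?_
  have : (#(G.edgesWithin A) : ℝ) + 1 ≤ k := by exact_mod_cast hA
  linarith

end SimpleGraph

lemma pratio_nonneg (r₁ r₂ i : ℕ) : 0 ≤ pratio r₁ r₂ i :=
  div_nonneg (Real.sqrt_nonneg _) (add_nonneg (Real.sqrt_nonneg _) (Real.sqrt_nonneg _))

lemma pratio_add_pratio {r₁ : ℕ} (hr₁ : 0 < r₁) (r₂ : ℕ) :
    pratio r₁ r₂ r₁ + pratio r₁ r₂ r₂ = 1 := by
  have hden : 0 < √r₁ + √r₂ :=
    add_pos_of_pos_of_nonneg (Real.sqrt_pos.2 (Nat.cast_pos.2 hr₁)) (Real.sqrt_nonneg _)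
  rw [pratio, pratio, ← add_div, div_self hden.ne']

theorem statement3_general (n r₁ r₂ r : ℕ) (hr₁ : 0 < r₁)
    (hineq : ∀ i ∈ ({r₁, r₂} : Set ℕ),
      (i : ℝ) ≤ r * pratio r₁ r₂ i ^ 2 -
        Real.sqrt (r * pratio r₁ r₂ i ^ 2 + 2 * r * n * pratio r₁ r₂ i ^ 3 -
          r * (2 * n + 1) * pratio r₁ r₂ i ^ 4)) :
    ∀ (V : Type) [Fintype V] [DecidableEq V] (G : SimpleGraph V) [DecidableRel G.Adj],
      Fintype.card V = n → G.edgeFinset.card = r →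
      ∃ V₁ V₂ : Finset V, Disjoint V₁ V₂ ∧ V₁ ∪ V₂ = Finset.univ ∧
        r₁ ≤ (G.edgeFinset.filter (· ∈ V₁.sym2)).card ∧
        r₂ ≤ (G.edgeFinset.filter (· ∈ V₂.sym2)).card := by
  intro V _ _ G _ hcard hedge
  subst hcard hedge
  have hp0 := pratio_nonneg r₁ r₂ r₁
  have hp₂ : pratio r₁ r₂ r₂ = 1 - pratio r₁ r₂ r₁ := by
    rw [← pratio_add_pratio hr₁, add_sub_cancel_left]
  have hp1 : pratio r₁ r₂ r₁ ≤ 1 := by linarith [pratio_nonneg r₁ r₂ r₂]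
  have h₁ := G.sum_bernoulliWeight_filter_card_edgesWithin_lt_lt_half hp0 hp1
    (hineq r₁ (by simp))
  have h₂ := G.sum_bernoulliWeight_filter_card_edgesWithin_lt_lt_half (sub_nonneg.2 hp1)
    (sub_le_self _ hp0) (hp₂ ▸ hineq r₂ (by simp))
  rw [← sum_bernoulliWeight_filter_compl] at h₂
  obtain ⟨A, hA₁, hA₂⟩ := exists_not_and_not_of_sum_filter_add_lt
    (bernoulliWeight_nonneg hp0 hp1) _ _
    ((add_lt_add h₁ h₂).trans_eq (by rw [add_halves, sum_bernoulliWeight]))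
  exact ⟨A, Aᶜ, disjoint_compl_right, union_compl A, not_lt.1 hA₁, not_lt.1 hA₂⟩

/-- If `r` satisfies `r·pᵢ² − √(r·pᵢ² + 2rn·pᵢ³ − r(2n+1)·pᵢ⁴) ≥ rᵢ` for `i = 1, 2`, then every
graph on `n` vertices with `r` edges has a vertex bipartition with at least `r₁` edges inside
one part and at least `r₂` edges inside the other. -/
theorem statement3 (n r₁ r₂ r : ℕ) (hn : 0 < n) (hr₁ : 0 < r₁) (hr₂ : 0 < r₂) (hr : 0 < r)
    (hrmax : 2 * r ≤ n * (n - 1))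
    (hineq : ∀ i ∈ ({r₁, r₂} : Set ℕ),
      (i : ℝ) ≤ r * pratio r₁ r₂ i ^ 2 -
        Real.sqrt (r * pratio r₁ r₂ i ^ 2 + 2 * r * n * pratio r₁ r₂ i ^ 3 -
          r * (2 * n + 1) * pratio r₁ r₂ i ^ 4)) :
    ∀ (V : Type) [Fintype V] [DecidableEq V] (G : SimpleGraph V) [DecidableRel G.Adj],
      Fintype.card V = n → G.edgeFinset.card = r →
      ∃ V₁ V₂ : Finset V, Disjoint V₁ V₂ ∧ V₁ ∪ V₂ = Finset.univ ∧
        r₁ ≤ (G.edgeFinset.filter (· ∈ V₁.sym2)).card ∧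
        r₂ ≤ (G.edgeFinset.filter (· ∈ V₂.sym2)).card :=
  statement3_general n r₁ r₂ r hr₁ hineq
end

section
/- Let k be a positive integer, let G be a finite simple graph on n vertices with minimum degree δ ≥ k, and let 0 ≤ p ≤ 1 be a real number. Then the total k-domination number of G satisfies γₖᵗ(G) ≤ n·(p + Σ_{i=0}^{k−1} (k−i)·C(δ,i)·pⁱ·(1−p)^{δ−i}), where C(δ,i) denotes the binomial coefficient. -/
/-!
Probabilistic method. Let `A` be a random set of vertices, each taken independently with
probability `p`, and fix `δ` neighbours `N v` of every vertex `v`. Adding to `A`, for each `v`,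
the `k - |N v ∩ A|` (truncated) neighbours that `v` still lacks yields a total `k`-dominating set.
As `|N v ∩ A|` is binomial with parameters `δ` and `p`, the expected size of this set is
`n p + n Σ_{i<k} (k - i) C(δ, i) pⁱ (1 - p)^(δ - i)`, so some choice of `A` does no worse.
-/

open Finset SimpleGraph

theorem Finset.exists_le_sum_mul {ι : Type*} {s : Finset ι} {w f : ι → ℝ}
    (hw₀ : ∀ i ∈ s, 0 ≤ w i) (hw₁ : ∑ i ∈ s, w i = 1) :
    ∃ i ∈ s, f i ≤ ∑ i ∈ s, w i * f i := by
  have hpos : 0 < ∑ i ∈ s, w i := hw₁ ▸ one_pos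
  obtain ⟨i, hi, hfi⟩ := s.exists_mem_eq_inf' (nonempty_of_sum_ne_zero hpos.ne') f
  refine ⟨i, hi, ?_⟩
  have := inf_le_centerMass hw₀ hpos (f := f)
  simpa only [centerMass_eq_of_sum_1 _ _ hw₁, hfi, smul_eq_mul] using this

section RandomSubset

variable {α : Type*} (p : ℝ)

/-- The probability that a random subset of `s`, containing each element independently with
probability `p`, equals `A` (for `A ⊆ s`). -/
def subsetWeight (s A : Finset α) : ℝ := p ^ #A * (1 - p) ^ (#s - #A)

variable {p}

theorem subsetWeight_nonneg (hp₀ : 0 ≤ p) (hp₁ : p ≤ 1) (s A : Finset α) :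
    0 ≤ subsetWeight p s A :=
  mul_nonneg (pow_nonneg hp₀ _) (pow_nonneg (sub_nonneg.2 hp₁) _)

variable (p)

theorem sum_subsetWeight (s : Finset α) : ∑ A ∈ s.powerset, subsetWeight p s A = 1 := by
  simp only [subsetWeight, sum_pow_mul_eq_add_pow, add_sub_cancel, one_pow]

variable [DecidableEq α]

theorem subsetWeight_eq_mul {s N A : Finset α} (hN : N ⊆ s) (hA : A ⊆ s) :
    subsetWeight p s A = subsetWeight p N (A ∩ N) * subsetWeight p (s \ N) (A \ N) := by
  have hA' : #(A ∩ N) + #(A \ N) = #A := card_inter_add_card_sdiff A N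
  have hs' : #(s \ N) + #N = #s := card_sdiff_add_card_eq_card hN
  have hAN : #(A ∩ N) ≤ #N := card_le_card inter_subset_right
  have hAs : #(A \ N) ≤ #(s \ N) := card_le_card (sdiff_subset_sdiff hA le_rfl)
  have hexp : #s - #A = (#N - #(A ∩ N)) + (#(s \ N) - #(A \ N)) := by omega
  rw [subsetWeight, subsetWeight, subsetWeight, hexp, ← hA', pow_add, pow_add]
  ring

theorem sum_subsetWeight_mul_inter {s N : Finset α} (hN : N ⊆ s) (h : Finset α → ℝ) :
    ∑ A ∈ s.powerset, subsetWeight p s A * h (A ∩ N) =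
      ∑ B ∈ N.powerset, subsetWeight p N B * h B := by
  calc ∑ A ∈ s.powerset, subsetWeight p s A * h (A ∩ N)
      = ∑ x ∈ N.powerset ×ˢ (s \ N).powerset,
          subsetWeight p N x.1 * h x.1 * subsetWeight p (s \ N) x.2 := by
        refine sum_nbij' (fun A ↦ (A ∩ N, A \ N)) (fun x ↦ x.1 ∪ x.2) ?_ ?_ ?_ ?_ ?_
        · intro A hA
          rw [mem_powerset] at hA
          rw [mem_product, mem_powerset, mem_powerset]
          exact ⟨inter_subset_right, sdiff_subset_sdiff hA le_rfl⟩
        · intro x hx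
          rw [mem_product, mem_powerset, mem_powerset] at hx
          rw [mem_powerset]
          exact union_subset (hx.1.trans hN) (hx.2.trans sdiff_subset)
        · intro A _
          exact sup_inf_sdiff A N
        · intro x hx
          rw [mem_product, mem_powerset, mem_powerset] at hx
          ext a <;> grind
        · intro A hA
          rw [subsetWeight_eq_mul p hN (mem_powerset.1 hA)]
          ring
    _ = ∑ B ∈ N.powerset, subsetWeight p N B * h B := by
        simp only [sum_product, ← mul_sum, sum_subsetWeight, mul_one]

theorem sum_subsetWeight_mul_card_inter {s N : Finset α} (hN : N ⊆ s) (f : ℕ → ℝ) :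
    ∑ A ∈ s.powerset, subsetWeight p s A * f #(A ∩ N) =
      ∑ i ∈ range (#N + 1), (#N).choose i * p ^ i * (1 - p) ^ (#N - i) * f i := by
  rw [sum_subsetWeight_mul_inter p hN (fun B ↦ f #B)]
  simp only [subsetWeight]
  rw [sum_powerset_apply_card (fun i ↦ p ^ i * (1 - p) ^ (#N - i) * f i)]
  simp only [nsmul_eq_mul, mul_assoc]

theorem sum_subsetWeight_mul_card (s : Finset α) :
    ∑ A ∈ s.powerset, subsetWeight p s A * #A = #s * p := by
  have hcard : ∀ A ⊆ s, (#A : ℝ) = ∑ v ∈ s, (#(A ∩ {v}) : ℝ) := by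
    intro A hA
    rw [card_eq_sum_card_fiberwise (f := id) hA, Nat.cast_sum]
    exact sum_congr rfl fun v _ ↦ by congr 2; ext; simp
  calc ∑ A ∈ s.powerset, subsetWeight p s A * #A
      = ∑ v ∈ s, ∑ A ∈ s.powerset, subsetWeight p s A * (#(A ∩ {v}) : ℝ) := by
        rw [sum_comm]
        exact sum_congr rfl fun A hA ↦ by rw [hcard A (mem_powerset.1 hA), mul_sum]
    _ = ∑ v ∈ s, p := sum_congr rfl fun v hv ↦ by
        rw [sum_subsetWeight_mul_card_inter p (singleton_subset_iff.2 hv) (fun i ↦ (i : ℝ))]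
        simp [sum_range_succ]
    _ = #s * p := by rw [sum_const, nsmul_eq_mul]

theorem sum_subsetWeight_mul_sub_card_inter {s N : Finset α} (hN : N ⊆ s) {k : ℕ}
    (hk : k ≤ #N) :
    ∑ A ∈ s.powerset, subsetWeight p s A * ((k - #(A ∩ N) : ℕ) : ℝ) =
      ∑ i ∈ range k, ((k : ℝ) - i) * (#N).choose i * p ^ i * (1 - p) ^ (#N - i) := by
  rw [sum_subsetWeight_mul_card_inter p hN (fun i ↦ ((k - i : ℕ) : ℝ)),
    ← sum_subset (range_subset_range.2 (Nat.le_succ_of_le hk))]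
  · refine sum_congr rfl fun i hi ↦ ?_
    rw [Nat.cast_sub (mem_range.1 hi).le]
    ring
  · intro i _ hi
    rw [Nat.sub_eq_zero_of_le (not_lt.1 (mt mem_range.2 hi)), Nat.cast_zero, mul_zero]

end RandomSubset

namespace SimpleGraph

variable {V : Type*} [Fintype V] [DecidableEq V] (G : SimpleGraph V) [DecidableRel G.Adj]

/-- Add to `A`, for each vertex, as many of its neighbours as it lacks in `A`. -/
theorem exists_totalDominating_card_le {k : ℕ} (hdeg : ∀ v, k ≤ G.degree v) (A : Finset V) :
    ∃ D : Finset V, (∀ v, k ≤ #(G.neighborFinset v ∩ D)) ∧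
      #D ≤ #A + ∑ v, (k - #(G.neighborFinset v ∩ A)) := by
  have hmissing : ∀ v, ∃ F ⊆ G.neighborFinset v \ A, #F = k - #(G.neighborFinset v ∩ A) := by
    intro v
    apply exists_subset_card_eq
    have := card_inter_add_card_sdiff (G.neighborFinset v) A
    have := G.card_neighborFinset_eq_degree v
    have := hdeg v
    omega
  choose F hFsub hFcard using hmissing
  refine ⟨A ∪ univ.biUnion F, fun v ↦ ?_, ?_⟩
  · have hdisj : Disjoint (G.neighborFinset v ∩ A) (F v) :=
      disjoint_of_subset_right (hFsub v) (disjoint_sdiff_inter _ _).symm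
    have hsub : (G.neighborFinset v ∩ A) ∪ F v ⊆ G.neighborFinset v ∩ (A ∪ univ.biUnion F) :=
      union_subset (inter_subset_inter_left subset_union_left)
        (subset_inter ((hFsub v).trans sdiff_subset)
          ((subset_biUnion_of_mem F (mem_univ v)).trans subset_union_right))
    have := card_le_card hsub
    rw [card_union_of_disjoint hdisj, hFcard v] at this
    omega
  · calc #(A ∪ univ.biUnion F) ≤ #A + #(univ.biUnion F) := card_union_le _ _
      _ ≤ #A + ∑ v, #(F v) := by gcongr; exact card_biUnion_le
      _ = #A + ∑ v, (k - #(G.neighborFinset v ∩ A)) := by simp only [hFcard]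

end SimpleGraph

theorem statement5_general (k δ : ℕ) (hkδ : k ≤ δ) (p : ℝ) (hp0 : 0 ≤ p) (hp1 : p ≤ 1)
    {V : Type*} [Fintype V] [DecidableEq V] (G : SimpleGraph V) [DecidableRel G.Adj]
    (hdeg : ∀ v : V, δ ≤ G.degree v) :
    ∃ D : Finset V, (∀ v : V, k ≤ (G.neighborFinset v ∩ D).card) ∧
      (D.card : ℝ) ≤ (Fintype.card V : ℝ) *
        (p + ∑ i ∈ Finset.range k,
          ((k : ℝ) - i) * (δ.choose i : ℝ) * p ^ i * (1 - p) ^ (δ - i)) := by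
  choose N hNG hNcard using fun v ↦
    exists_subset_card_eq ((G.card_neighborFinset_eq_degree v).symm ▸ hdeg v)
  let cost : Finset V → ℝ := fun A ↦ #A + ∑ v, ((k - #(A ∩ N v) : ℕ) : ℝ)
  have hexpect : ∑ A ∈ univ.powerset, subsetWeight p univ A * cost A =
      Fintype.card V * (p + ∑ i ∈ range k,
        ((k : ℝ) - i) * (δ.choose i : ℝ) * p ^ i * (1 - p) ^ (δ - i)) := by
    simp only [cost, mul_add, mul_sum, sum_add_distrib]
    rw [sum_subsetWeight_mul_card, sum_comm]
    simp only [sum_subsetWeight_mul_sub_card_inter p (subset_univ _) ((hNcard _).symm ▸ hkδ),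
      hNcard, card_univ, sum_const, nsmul_eq_mul, mul_sum]
  obtain ⟨A, -, hA⟩ := exists_le_sum_mul (fun A _ ↦ subsetWeight_nonneg hp0 hp1 univ A)
    (sum_subsetWeight p univ) (f := cost)
  obtain ⟨D, hD, hDcard⟩ := G.exists_totalDominating_card_le (fun v ↦ hkδ.trans (hdeg v)) A
  refine ⟨D, hD, le_trans ?_ (hexpect ▸ hA)⟩
  calc (#D : ℝ) ≤ #A + ∑ v, ((k - #(G.neighborFinset v ∩ A) : ℕ) : ℝ) := by exact_mod_cast hDcard
    _ ≤ cost A := by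
      refine add_le_add_right (sum_le_sum fun v _ ↦ Nat.cast_le.2 (Nat.sub_le_sub_left ?_ k)) _
      rw [inter_comm A]
      exact card_le_card (inter_subset_inter_right (hNG v))

/-- Henning–Kazemi bound on the total `k`-domination number: a graph on `n` vertices with
minimum degree `δ ≥ k` has a total `k`-dominating set of size at most
`n(p + Σ_{i<k} (k−i)·C(δ,i)·pⁱ(1−p)^{δ−i})` for any `0 ≤ p ≤ 1`. -/
theorem statement5 (k δ : ℕ) (hk : 0 < k) (hkδ : k ≤ δ) (p : ℝ) (hp0 : 0 ≤ p) (hp1 : p ≤ 1)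
    {V : Type*} [Fintype V] [DecidableEq V] (G : SimpleGraph V) [DecidableRel G.Adj]
    (hdeg : ∀ v : V, δ ≤ G.degree v) :
    ∃ D : Finset V, (∀ v : V, k ≤ (G.neighborFinset v ∩ D).card) ∧
      (D.card : ℝ) ≤ (Fintype.card V : ℝ) *
        (p + ∑ i ∈ Finset.range k,
          ((k : ℝ) - i) * (δ.choose i : ℝ) * p ^ i * (1 - p) ^ (δ - i)) :=
  statement5_general k δ hkδ p hp0 hp1 G hdeg
end

section
/- Let k be an odd integer with k ≥ 5. Suppose G=(V,E) is a finite simple graph consisting only of isolated edges (i.e. a perfect matching on its vertex set). Then for any colouring g:V→ℕ there exists a colouring f:E→{0,…,k−1} such that (1) no vertex v∈V has partial sum s_{(f,g)}(v) congruent to 0 or 1 modulo k, and (2) for each i with 2 ≤ i ≤ k−1, the number of vertices v∈V with s_{(f,g)}(v) ≡ i (mod k) is at most |V|/(k−3) + k + 1. -/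
open Finset SimpleGraph

/-- The partial sum of a vertex `v`: `g(v)` plus the sum of the colours of the edges
incident with `v`. -/
def partialSum {V : Type*} [Fintype V] [DecidableEq V] (G : SimpleGraph V)
    [DecidableRel G.Adj] (f : Sym2 V → ℕ) (g : V → ℕ) (v : V) : ℕ :=
  g v + ∑ e ∈ G.incidenceFinset v, f e

/-!
Orient every edge `uv` so that `δ = g v - g u` in `ZMod k` has `δ.val ≤ k / 2`. Colouring the
edge then amounts to choosing the class `x` of `u`; the class of `v` is `x + δ`, and `x` must avoid
`0, 1, -δ, 1 - δ`. For each difference `δ` the classes are handed out to its edges in proportion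
to a weight `w` that vanishes on these four classes, satisfies `w x + w (x - δ) ≤ 2` and has total
at least `k - 3`: along each run of allowed classes between forbidden ones on a `δ`-orbit take
`2, 0, 2, 0, …`, and take `1` on orbits without forbidden classes. A class is then hit at most
`2 (m / (k - 3) + 1)` times by the `m` edges of difference `δ`; summing over the `(k + 1) / 2`
differences and using `|V| = 2 |E|` gives the bound. The total weight reaches `k - 3` by parity:
with four forbidden classes, `k` odd forces a run of odd length, where `2, 0, …, 0, 2` gains one
over the weight `1`.
-/

section Weight

variable {k : ℕ}

def blocked (δ : ZMod k) : Finset (ZMod k) := {0, 1, -δ, 1 - δ}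

theorem mem_blocked_iff {δ x : ZMod k} :
    x ∈ blocked δ ↔ x = 0 ∨ x = 1 ∨ x + δ = 0 ∨ x + δ = 1 := by
  simp [blocked, eq_neg_iff_add_eq_zero, eq_sub_iff_add_eq]

open Classical in
noncomputable def weight (δ x : ZMod k) : ℕ :=
  if h : ∃ j : ℕ, x - j • δ ∈ blocked δ then if Odd (Nat.find h) then 2 else 0 else 1

theorem weight_le_two (δ x : ZMod k) : weight δ x ≤ 2 := by
  unfold weight; split_ifs <;> omega

theorem weight_eq_zero_of_mem_blocked {δ x : ZMod k} (hx : x ∈ blocked δ) : weight δ x = 0 := by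
  have h : ∃ j : ℕ, x - j • δ ∈ blocked δ := ⟨0, by simpa using hx⟩
  rw [weight, dif_pos h, (Nat.find_eq_zero h).2 (by simpa using hx)]
  simp

theorem weight_add_weight_sub {δ x : ZMod k} (hx : x ∉ blocked δ) :
    weight δ x + weight δ (x - δ) = 2 := by
  have hshift : ∀ j : ℕ, x - (j + 1) • δ = x - δ - j • δ := fun j => by
    rw [succ_nsmul]; abel
  by_cases h : ∃ j : ℕ, x - δ - j • δ ∈ blocked δ
  · have h' : ∃ j : ℕ, x - j • δ ∈ blocked δ := by
      obtain ⟨j, hj⟩ := h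
      exact ⟨j + 1, hshift j ▸ hj⟩
    have h'' : ∃ j : ℕ, x - (j + 1) • δ ∈ blocked δ := by simpa only [hshift] using h
    have hfind : Nat.find h' = Nat.find h + 1 := by
      rw [Nat.find_comp_succ h' h'' (by simpa using hx), Nat.find_congr' fun {n} => by rw [hshift]]
    rw [weight, weight, dif_pos h', dif_pos h, hfind]
    simp only [Nat.odd_add_one]
    split_ifs <;> simp_all
  · have h' : ¬ ∃ j : ℕ, x - j • δ ∈ blocked δ := by
      rintro ⟨_ | j, hj⟩
      · exact hx (by simpa using hj)
      · exact h ⟨j, hshift j ▸ hj⟩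
    rw [weight, weight, dif_neg h, dif_neg h']

theorem weight_add_weight_sub_le (δ x : ZMod k) : weight δ x + weight δ (x - δ) ≤ 2 := by
  by_cases hx : x ∈ blocked δ
  · simpa [weight_eq_zero_of_mem_blocked hx] using weight_le_two δ (x - δ)
  · exact (weight_add_weight_sub hx).le

theorem weight_ne_one_of_nsmul_eq_one [NeZero k] {δ : ZMod k} {n : ℕ} (hn : n • δ = 1)
    (x : ZMod k) : weight δ x ≠ 1 := by
  have h : ∃ j : ℕ, x - j • δ ∈ blocked δ := by
    refine ⟨x.val * n, ?_⟩
    rw [mul_nsmul', hn, nsmul_one, ZMod.natCast_zmod_val, sub_self]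
    simp [blocked]
  rw [weight, dif_pos h]
  split_ifs <;> omega

-- If `1` is not a multiple of `δ`, the run `δ, 2 • δ, …, -(2 • δ)` between the blocked classes `0`
-- and `-δ` has odd length `addOrderOf δ - 2`.
theorem weight_neg_two_nsmul (hk : Odd k) {δ : ZMod k} (hδ : δ ≠ 0) (h1 : ∀ n : ℕ, n • δ ≠ 1) :
    weight δ (-(2 • δ)) = 2 := by
  have : NeZero k := ⟨hk.pos.ne'⟩
  set ℓ := addOrderOf δ
  have hℓ : Odd ℓ := hk.of_dvd_nat (by simpa using addOrderOf_dvd_card (x := δ))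
  have hℓ3 : 3 ≤ ℓ := by
    have : ℓ ≠ 1 := fun h => hδ (AddMonoid.addOrderOf_eq_one_iff.1 h)
    obtain ⟨c, hc⟩ := hℓ
    have := addOrderOf_pos δ
    omega
  have hneg : ∀ m : ℕ, -(m • δ) ≠ 1 := fun m hm => h1 (m * (ℓ - 1)) <| by
    rw [← hm, eq_neg_iff_add_eq_zero, ← add_nsmul, ← mul_add_one, Nat.sub_add_cancel (by omega),
      mul_nsmul', addOrderOf_nsmul_eq_zero, nsmul_zero]
  have hmem : ∀ j : ℕ, -(2 • δ) - j • δ ∈ blocked δ ↔ ℓ ∣ j + 2 ∨ ℓ ∣ j + 1 := by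
    intro j
    have e2 : -(2 • δ) - j • δ = -((j + 2) • δ) := by rw [add_nsmul]; abel
    have e1 : -((j + 2) • δ) + δ = -((j + 1) • δ) := by rw [add_nsmul, add_nsmul]; abel
    rw [e2, mem_blocked_iff, e1]
    simp only [neg_eq_zero, hneg, or_false, false_or, ← addOrderOf_dvd_iff_nsmul_eq_zero]
    rfl
  have h : ∃ j : ℕ, -(2 • δ) - j • δ ∈ blocked δ :=
    ⟨ℓ - 2, (hmem _).2 (Or.inl (by rw [Nat.sub_add_cancel (by omega)]))⟩
  have hfind : Nat.find h = ℓ - 2 := by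
    refine (Nat.find_eq_iff h).2 ⟨(hmem _).2 (Or.inl (by rw [Nat.sub_add_cancel (by omega)])),
      fun j hj hb => ?_⟩
    rcases (hmem j).1 hb with hd | hd <;> have := Nat.le_of_dvd (by omega) hd <;> omega
  rw [weight, dif_pos h, hfind, if_pos]
  obtain ⟨c, hc⟩ := hℓ
  exact ⟨c - 1, by omega⟩

theorem sum_weight_add_card [NeZero k] (δ : ZMod k) :
    ∑ x, weight δ x + #(blocked δ) + #{x | x ∉ blocked δ ∧ weight δ x = 0} =
      k + #{x | weight δ x = 2} := by
  have hpt : ∀ x, weight δ x + (if x ∈ blocked δ then 1 else 0) +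
      (if x ∉ blocked δ ∧ weight δ x = 0 then 1 else 0) = 1 + if weight δ x = 2 then 1 else 0 := by
    intro x
    by_cases hx : x ∈ blocked δ
    · simp [hx, weight_eq_zero_of_mem_blocked hx]
    · have := weight_le_two δ x
      interval_cases weight δ x <;> simp [hx]
  have hB : #(blocked δ) = ∑ x, if x ∈ blocked δ then 1 else 0 := by
    rw [← card_filter, filter_univ_mem]
  rw [hB, card_filter, card_filter, ← sum_add_distrib,
    ← sum_add_distrib, sum_congr rfl fun x _ => hpt x, sum_add_distrib]
  simp

theorem card_filter_weight_eq_zero_le [NeZero k] (δ : ZMod k) :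
    #{x | x ∉ blocked δ ∧ weight δ x = 0} ≤
      #(({x | weight δ x = 2} : Finset _).erase (-(2 • δ))) := by
  refine card_le_card_of_injOn (· - δ) (fun x hx => ?_) sub_left_injective.injOn
  simp only [coe_filter, mem_univ, true_and, Set.mem_ofPred_eq, coe_erase, Set.mem_sdiff,
    Set.mem_singleton_iff] at hx ⊢
  refine ⟨by simpa [hx.2] using weight_add_weight_sub hx.1, fun h => hx.1 ?_⟩
  rw [mem_blocked_iff, sub_eq_iff_eq_add.1 h, two_nsmul]
  right; right; left; abel

theorem sub_three_le_sum_weight [NeZero k] (hk : Odd k) (δ : ZMod k) :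
    k - 3 ≤ ∑ x, weight δ x := by
  have hsum := sum_weight_add_card δ
  have hZ := (card_filter_weight_eq_zero_le δ).trans card_erase_le
  have hB4 : #(blocked δ) ≤ 4 := card_le_four
  rcases hB4.lt_or_eq with hB | hB
  · omega
  have hδ : δ ≠ 0 := by
    rintro rfl
    have : blocked (0 : ZMod k) ⊆ {0, 1} := by intro x; simp [blocked]
    have := (card_le_card this).trans card_le_two
    omega
  by_cases h1 : ∃ n : ℕ, n • δ = 1
  · obtain ⟨n, hn⟩ := h1
    have h2 : ∑ x, weight δ x = 2 * #{x | weight δ x = 2} := by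
      rw [card_filter, mul_sum]
      refine sum_congr rfl fun x _ => ?_
      have := weight_le_two δ x
      have := weight_ne_one_of_nsmul_eq_one hn x
      interval_cases weight δ x <;> simp_all
    -- the weight-two and the unblocked weight-zero classes number `k - 4`, which is odd
    obtain ⟨c, rfl⟩ := hk
    omega
  · push Not at h1
    have hmem : -(2 • δ) ∈ ({x | weight δ x = 2} : Finset (ZMod k)) :=
      mem_filter.2 ⟨mem_univ _, weight_neg_two_nsmul hk hδ h1⟩
    have := card_erase_add_one hmem
    have := card_filter_weight_eq_zero_le δ
    omega

theorem exists_card_filter_eq_le {α β : Type*} [DecidableEq α] [Fintype β] [DecidableEq β]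
    [Nonempty β] (w : β → ℕ) (q : ℕ) (s : Finset α) (hs : #s ≤ q * ∑ b, w b) :
    ∃ x : α → β, (∀ a ∈ s, w (x a) ≠ 0) ∧ ∀ b, #{a ∈ s | x a = b} ≤ q * w b := by
  induction s using Finset.induction_on with
  | empty => exact ⟨fun _ => Classical.arbitrary β, by simp, by simp⟩
  | insert a s ha ih =>
    rw [card_insert_of_notMem ha] at hs
    obtain ⟨x, hx, hfib⟩ := ih (by omega)
    obtain ⟨b₀, -, hb₀⟩ : ∃ b ∈ univ, #{a ∈ s | x a = b} < q * w b := by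
      refine exists_lt_of_sum_lt ?_
      rw [← card_eq_sum_card_fiberwise fun _ _ => mem_coe.2 (mem_univ _), ← mul_sum]
      omega
    have hupdate : ∀ a' ∈ s, Function.update x a b₀ a' = x a' := fun a' h' =>
      Function.update_of_ne (ne_of_mem_of_not_mem h' ha) _ _
    refine ⟨Function.update x a b₀, fun a' ha' => ?_, fun b => ?_⟩
    · rcases mem_insert.1 ha' with rfl | ha'
      · rw [Function.update_self]
        rintro h
        simp [h] at hb₀
      · rw [hupdate a' ha']
        exact hx a' ha'
    · rw [filter_insert, filter_congr fun a' h' => by rw [hupdate a' h'], Function.update_self]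
      split_ifs with hb
      · subst hb
        exact (card_insert_le _ _).trans hb₀
      · exact hfib b

theorem exists_classes_of_diff [NeZero k] (hk : Odd k) (hk3 : 3 < k) {ι : Type*} [DecidableEq ι]
    (d : ZMod k) (s : Finset ι) :
    ∃ x : ι → ZMod k, (∀ i ∈ s, x i ∉ blocked d) ∧
      ∀ c, #{i ∈ s | x i = c} + #{i ∈ s | x i + d = c} ≤ 2 * (#s / (k - 3) + 1) := by
  set q := #s / (k - 3) + 1
  have hs : #s ≤ q * ∑ x, weight d x :=
    calc #s ≤ q * (k - 3) :=
          (Nat.lt_mul_div_succ #s (by omega : 0 < k - 3)).le.trans_eq (mul_comm _ _)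
      _ ≤ q * ∑ x, weight d x := Nat.mul_le_mul_left _ (sub_three_le_sum_weight hk d)
  obtain ⟨x, hx, hfib⟩ := exists_card_filter_eq_le (weight d) q s hs
  refine ⟨x, fun i hi h => hx i hi (weight_eq_zero_of_mem_blocked h), fun c => ?_⟩
  have hshift : #{i ∈ s | x i + d = c} = #{i ∈ s | x i = c - d} := by
    simp_rw [eq_sub_iff_add_eq]
  calc _ ≤ q * weight d c + q * weight d (c - d) := add_le_add (hfib c) (hshift ▸ hfib (c - d))
    _ = q * (weight d c + weight d (c - d)) := by ring
    _ ≤ q * 2 := Nat.mul_le_mul_left _ (weight_add_weight_sub_le d c)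
    _ = 2 * q := mul_comm _ _

theorem exists_classes [NeZero k] (hk : Odd k) (hk3 : 3 < k) {ι : Type*} [DecidableEq ι]
    (E : Finset ι) (δ : ι → ZMod k) (D : Finset (ZMod k)) (hD : ∀ i ∈ E, δ i ∈ D) :
    ∃ x : ι → ZMod k, (∀ i ∈ E, x i ∉ blocked (δ i)) ∧ ∀ c,
      (#{i ∈ E | x i = c} + #{i ∈ E | x i + δ i = c} : ℝ) ≤ 2 * #E / (k - 3) + 2 * #D := by
  choose y hy hcount using fun d => exists_classes_of_diff hk hk3 d {i ∈ E | δ i = d}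
  refine ⟨fun i => y (δ i) i, fun i hi => hy _ i (mem_filter.2 ⟨hi, rfl⟩), fun c => ?_⟩
  have hnat : #{i ∈ E | y (δ i) i = c} + #{i ∈ E | y (δ i) i + δ i = c} ≤
      ∑ d ∈ D, 2 * (#{i ∈ E | δ i = d} / (k - 3) + 1) := by
    rw [card_filter, card_filter, ← sum_add_distrib, ← sum_fiberwise_of_maps_to hD]
    refine sum_le_sum fun d _ => le_of_eq_of_le ?_ (hcount d c)
    rw [card_filter, card_filter, ← sum_add_distrib]
    refine sum_congr rfl fun i hi => ?_
    rw [(mem_filter.1 hi).2]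
  have hk3' : ((k - 3 : ℕ) : ℝ) = k - 3 := by rw [Nat.cast_sub hk3.le]; norm_num
  calc _ ≤ ((∑ d ∈ D, 2 * (#{i ∈ E | δ i = d} / (k - 3) + 1) : ℕ) : ℝ) := by exact_mod_cast hnat
    _ ≤ ∑ d ∈ D, (2 * (#{i ∈ E | δ i = d} : ℝ) / (k - 3) + 2) := by
      push_cast
      refine sum_le_sum fun d _ => ?_
      have := Nat.cast_div_le (α := ℝ) (m := #{i ∈ E | δ i = d}) (n := k - 3)
      rw [hk3'] at this
      rw [mul_div_assoc]
      linarith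
    _ = 2 * #E / (k - 3) + 2 * #D := by
      rw [sum_add_distrib, ← sum_div, ← mul_sum, ← Nat.cast_sum, ← card_eq_sum_card_fiberwise hD]
      simp [mul_comm]

theorem two_mul_card_filter_val_le [NeZero k] (hk : Odd k) :
    2 * #({d : ZMod k | d.val ≤ k / 2}) ≤ k + 1 := by
  have : #({d : ZMod k | d.val ≤ k / 2}) ≤ k / 2 + 1 :=
    (card_le_card_of_injOn ZMod.val (fun d hd => by simp at hd ⊢; omega)
      (ZMod.val_injective k).injOn).trans (card_range _).le
  obtain ⟨c, rfl⟩ := hk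
  omega

end Weight

theorem mod_eq_iff_natCast_eq {k n i : ℕ} (hi : i < k) : n % k = i ↔ (n : ZMod k) = i := by
  rw [ZMod.natCast_eq_natCast_iff', Nat.mod_eq_of_lt hi]

theorem Sym2.exists_orientation {V : Type*} {k : ℕ} [NeZero k] (φ : V → ZMod k) :
    ∃ u v : Sym2 V → V, ∀ e, e = s(u e, v e) ∧ (φ (v e) - φ (u e)).val ≤ k / 2 := by
  have : ∀ e : Sym2 V, ∃ p : V × V, e = s(p.1, p.2) ∧ (φ p.2 - φ p.1).val ≤ k / 2 := by
    refine Sym2.ind fun a b => ?_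
    rcases le_or_gt (φ b - φ a).val (k / 2) with h | h
    · exact ⟨(a, b), rfl, h⟩
    · refine ⟨(b, a), Sym2.eq_swap, ?_⟩
      have hne : φ b - φ a ≠ 0 := by rintro h0; simp [h0] at h
      rw [← neg_sub (φ b) (φ a), ZMod.neg_val, if_neg hne]
      have := ZMod.val_lt (φ b - φ a)
      omega
  choose p hp using this
  exact ⟨fun e => (p e).1, fun e => (p e).2, hp⟩

theorem Sym2.card_filter_mem_mk {V : Type*} [Fintype V] [DecidableEq V] {a b : V} (hab : a ≠ b)
    (p : V → Prop) [DecidablePred p] :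
    #{w ∈ {w | p w} | w ∈ s(a, b)} = (if p a then 1 else 0) + if p b then 1 else 0 := by
  have : ({w ∈ {w | p w} | w ∈ s(a, b)} : Finset V) = ({a, b} : Finset V).filter p := by
    ext
    simp [Sym2.mem_iff, and_comm]
  rw [this, filter_insert, filter_singleton]
  split_ifs <;> simp [hab]

namespace SimpleGraph

variable {V : Type*} [Fintype V] [DecidableEq V] {G : SimpleGraph V} [DecidableRel G.Adj]

theorem incidenceFinset_eq_singleton {v : V} (hv : G.degree v = 1) {e : Sym2 V}
    (he : e ∈ G.incidenceFinset v) : G.incidenceFinset v = {e} :=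
  eq_singleton_iff_unique_mem.2 ⟨he, fun _ he' =>
    card_le_one.1 (by rw [card_incidenceFinset_eq_degree, hv]) _ he' _ he⟩

theorem partialSum_eq_add {v : V} (hv : G.degree v = 1) {e : Sym2 V} (he : e ∈ G.edgeSet)
    (hve : v ∈ e) (f : Sym2 V → ℕ) (g : V → ℕ) : partialSum G f g v = g v + f e := by
  rw [partialSum, incidenceFinset_eq_singleton hv ((G.mem_incidenceFinset _ _).2 ⟨he, hve⟩),
    sum_singleton]

variable {u v : Sym2 V → V}

theorem exists_eq_or_eq_of_degree_eq_one {w : V} (hw : G.degree w = 1)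
    (huv : ∀ e ∈ G.edgeFinset, e = s(u e, v e)) : ∃ e ∈ G.edgeFinset, w = u e ∨ w = v e := by
  obtain ⟨e, he⟩ : (G.incidenceFinset w).Nonempty := by
    rw [← card_pos, card_incidenceFinset_eq_degree, hw]
    exact one_pos
  rw [mem_incidenceFinset] at he
  have he' := mem_edgeFinset.2 he.1
  exact ⟨e, he', Sym2.mem_iff.1 (huv e he' ▸ he.2)⟩

theorem card_filter_eq_of_degree_eq_one (hG : ∀ w, G.degree w = 1)
    (huv : ∀ e ∈ G.edgeFinset, e = s(u e, v e)) (p : V → Prop) [DecidablePred p] :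
    #{w | p w} = #{e ∈ G.edgeFinset | p (u e)} + #{e ∈ G.edgeFinset | p (v e)} := by
  calc #{w | p w} = ∑ w ∈ {w | p w}, #(G.incidenceFinset w) := by
        simp [card_incidenceFinset_eq_degree, hG]
    _ = ∑ e ∈ G.edgeFinset, #{w ∈ {w | p w} | w ∈ e} := by
        simp_rw [incidenceFinset_eq_filter]
        exact sum_card_bipartiteAbove_eq_sum_card_bipartiteBelow (· ∈ ·)
    _ = ∑ e ∈ G.edgeFinset, ((if p (u e) then 1 else 0) + if p (v e) then 1 else 0) := by
        refine sum_congr rfl fun e he => ?_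
        have hne : u e ≠ v e := G.ne_of_adj (mem_edgeFinset.1 (huv e he ▸ he))
        conv_lhs => rw [huv e he]
        exact Sym2.card_filter_mem_mk hne p
    _ = _ := by rw [sum_add_distrib, card_filter, card_filter]

variable {k : ℕ} {f : Sym2 V → ℕ} {g : V → ℕ} {x : Sym2 V → ZMod k}

theorem natCast_partialSum_eq (hG : ∀ w, G.degree w = 1)
    (huv : ∀ e ∈ G.edgeFinset, e = s(u e, v e))
    (hf : ∀ e ∈ G.edgeFinset, (f e : ZMod k) = x e - g (u e)) {e : Sym2 V}
    (he : e ∈ G.edgeFinset) :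
    (partialSum G f g (u e) : ZMod k) = x e ∧
      (partialSum G f g (v e) : ZMod k) = x e + (g (v e) - g (u e)) := by
  have hu := Sym2.mem_mk_left (u e) (v e)
  have hv := Sym2.mem_mk_right (u e) (v e)
  rw [← huv e he] at hu hv
  rw [partialSum_eq_add (hG _) (mem_edgeFinset.1 he) hu,
    partialSum_eq_add (hG _) (mem_edgeFinset.1 he) hv]
  push_cast
  rw [hf e he]
  constructor <;> ring

theorem natCast_partialSum_ne_zero_one (hG : ∀ w, G.degree w = 1)
    (huv : ∀ e ∈ G.edgeFinset, e = s(u e, v e))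
    (hf : ∀ e ∈ G.edgeFinset, (f e : ZMod k) = x e - g (u e))
    (hx : ∀ e ∈ G.edgeFinset, x e ∉ blocked (g (v e) - g (u e) : ZMod k)) (w : V) :
    (partialSum G f g w : ZMod k) ≠ 0 ∧ (partialSum G f g w : ZMod k) ≠ 1 := by
  obtain ⟨e, he, rfl | rfl⟩ := exists_eq_or_eq_of_degree_eq_one (hG w) huv <;>
    have := mem_blocked_iff.not.1 (hx e he)
  · rw [(natCast_partialSum_eq hG huv hf he).1]; tauto
  · rw [(natCast_partialSum_eq hG huv hf he).2]; tauto

theorem card_filter_natCast_partialSum_eq (hG : ∀ w, G.degree w = 1)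
    (huv : ∀ e ∈ G.edgeFinset, e = s(u e, v e))
    (hf : ∀ e ∈ G.edgeFinset, (f e : ZMod k) = x e - g (u e)) (c : ZMod k) :
    #{w | (partialSum G f g w : ZMod k) = c} =
      #{e ∈ G.edgeFinset | x e = c} + #{e ∈ G.edgeFinset | x e + (g (v e) - g (u e)) = c} := by
  have hu : {e ∈ G.edgeFinset | (partialSum G f g (u e) : ZMod k) = c} =
      {e ∈ G.edgeFinset | x e = c} :=
    filter_congr fun e he => by rw [(natCast_partialSum_eq hG huv hf he).1]
  have hv : {e ∈ G.edgeFinset | (partialSum G f g (v e) : ZMod k) = c} =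
      {e ∈ G.edgeFinset | x e + (g (v e) - g (u e)) = c} :=
    filter_congr fun e he => by rw [(natCast_partialSum_eq hG huv hf he).2]
  rw [card_filter_eq_of_degree_eq_one hG huv, hu, hv]

end SimpleGraph

/-- If `k ≥ 5` is odd and `G` consists only of isolated edges (every vertex has degree one),
then for any vertex colouring `g` there is an edge colouring `f` with colours `{0,…,k−1}` such
that no partial sum is `0` or `1` mod `k`, and at most `|V|/(k−3) + k + 1` partial sums lie in
any congruency class mod `k`. -/
theorem statement6 (k : ℕ) (hodd : Odd k) (hk : 5 ≤ k)
    {V : Type*} [Fintype V] [DecidableEq V] (G : SimpleGraph V) [DecidableRel G.Adj]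
    (hmatch : ∀ v : V, G.degree v = 1) (g : V → ℕ) :
    ∃ f : Sym2 V → ℕ,
      (∀ e ∈ G.edgeFinset, f e < k) ∧
      (∀ v : V, partialSum G f g v % k ≠ 0 ∧ partialSum G f g v % k ≠ 1) ∧
      ∀ i : ℕ, 2 ≤ i → i ≤ k - 1 →
        ((Finset.univ.filter (fun v => partialSum G f g v % k = i)).card : ℝ) ≤
          (Fintype.card V : ℝ) / ((k : ℝ) - 3) + k + 1 := by
  have : NeZero k := ⟨by omega⟩
  obtain ⟨u, v, hor⟩ := Sym2.exists_orientation fun w => (g w : ZMod k)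
  have huv : ∀ e ∈ G.edgeFinset, e = s(u e, v e) := fun e _ => (hor e).1
  obtain ⟨x, hx, hcount⟩ := exists_classes hodd (by omega) G.edgeFinset
    (fun e => (g (v e) - g (u e) : ZMod k)) {d | d.val ≤ k / 2} fun e _ => by simpa using (hor e).2
  have hf : ∀ e ∈ G.edgeFinset, (((x e - g (u e)).val : ℕ) : ZMod k) = x e - g (u e) :=
    fun e _ => ZMod.natCast_zmod_val _
  refine ⟨fun e => (x e - g (u e)).val, fun e _ => ZMod.val_lt _, fun w => ?_, fun i _ hik => ?_⟩
  · rw [Ne, Ne, mod_eq_iff_natCast_eq (by omega : 0 < k), mod_eq_iff_natCast_eq (by omega : 1 < k),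
      Nat.cast_zero, Nat.cast_one]
    exact natCast_partialSum_ne_zero_one hmatch huv hf hx w
  · have hV : Fintype.card V = 2 * #G.edgeFinset := by
      simpa [hmatch] using G.sum_degrees_eq_twice_card_edges
    simp_rw [mod_eq_iff_natCast_eq (by omega : i < k)]
    rw [card_filter_natCast_partialSum_eq hmatch huv hf, hV, Nat.cast_mul, Nat.cast_ofNat,
      add_assoc]
    push_cast
    refine (hcount _).trans ?_
    gcongr
    exact_mod_cast two_mul_card_filter_val_le hodd
end

section
/- Let S₁,…,S_k be vertex-disjoint stars with centres c₁,…,c_k, let L be a set of integers of size |⋃_{i=1}^k E(Sᵢ)|, and let g be a function from ⋃_{i=1}^k V(Sᵢ) to ℕ. Then there exists a bijective edge labelling f: ⋃_{i=1}^k E(Sᵢ) → L such that the sums s_{(f,g)}(cᵢ) = g(cᵢ) + Σ_{e∋cᵢ} f(e) are pairwise distinct over i = 1,…,k. -/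
/-!
Among all pairs `(i, B)` with `B ⊆ L` and `#B = #(A i)`, pick one maximising the weight
`g (c i) + ∑ B`. Every block `T ⊆ L \ B` of size `#(A j)` is then strictly lighter: since `B` and
`T` are disjoint and nonempty, some `x ∈ B` and `y ∈ T` differ, and exchanging them raises the sum
of one of the two blocks, so equality would contradict maximality. Hence `B` can be given to star
`i` and the remaining stars handled recursively in `L \ B`, which splits `L` into blocks with
pairwise distinct weights. Labelling the leaves of each star bijectively by its block gives the
required edge labelling.
-/

open Finset SimpleGraph

/-- The edge set of a disjoint collection of stars with centres `c i` and leaf sets `A i`. -/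
def starEdges {V : Type*} [DecidableEq V] (k : ℕ) (c : Fin k → V) (A : Fin k → Finset V) :
    Finset (Sym2 V) :=
  (Finset.univ : Finset (Fin k)).biUnion fun i => (A i).image fun v => s(c i, v)

namespace Finset

variable {α : Type*} [AddCommMonoid α] [LinearOrder α] [IsOrderedCancelAddMonoid α]

theorem exists_card_eq_sum_lt_of_lt {X : Finset α} {x y : α} (hx : x ∈ X) (hy : y ∉ X)
    (hxy : x < y) : ∃ X' ⊆ insert y X, X'.card = X.card ∧ ∑ z ∈ X, z < ∑ z ∈ X', z := by
  have hy' : y ∉ X.erase x := fun h => hy (mem_of_mem_erase h)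
  refine ⟨insert y (X.erase x), insert_subset_insert y (erase_subset x X), ?_, ?_⟩
  · rw [card_insert_of_notMem hy', card_erase_add_one hx]
  · rw [sum_insert hy', ← add_sum_erase X (fun z => z) hx]
    exact add_lt_add_left hxy _

theorem exists_sum_lt_of_disjoint {B T : Finset α} (hB : B.Nonempty) (hT : T.Nonempty)
    (hBT : Disjoint B T) :
    (∃ B' ⊆ B ∪ T, B'.card = B.card ∧ ∑ z ∈ B, z < ∑ z ∈ B', z) ∨
      ∃ T' ⊆ B ∪ T, T'.card = T.card ∧ ∑ z ∈ T, z < ∑ z ∈ T', z := by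
  obtain ⟨x, hx⟩ := hB
  obtain ⟨y, hy⟩ := hT
  rcases lt_or_gt_of_ne (disjoint_iff_ne.1 hBT x hx y hy) with hxy | hyx
  · obtain ⟨B', hB', hB'T⟩ := exists_card_eq_sum_lt_of_lt hx (disjoint_right.1 hBT hy) hxy
    exact .inl ⟨B', hB'.trans (insert_subset (mem_union_right B hy) subset_union_left), hB'T⟩
  · obtain ⟨T', hT', hT'T⟩ := exists_card_eq_sum_lt_of_lt hy (disjoint_left.1 hBT hx) hyx
    exact .inr ⟨T', hT'.trans (insert_subset (mem_union_left T hx) subset_union_right), hT'T⟩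

end Finset

section Blocks

variable {ι α : Type*} [AddCommMonoid α] [LinearOrder α] (n : ι → ℕ) (w : ι → α)

theorem exists_forall_weight_le (s : Finset ι) (L : Finset α) (hs : ∃ i ∈ s, n i ≤ L.card) :
    ∃ i ∈ s, ∃ B ⊆ L, B.card = n i ∧
      ∀ j ∈ s, ∀ T ⊆ L, T.card = n j → w j + ∑ x ∈ T, x ≤ w i + ∑ x ∈ B, x := by
  obtain ⟨i₀, hi₀, hle⟩ := hs
  have hblocks : (s.sigma fun i => L.powersetCard (n i)).Nonempty :=
    ⟨⟨i₀, _⟩, mem_sigma.2 ⟨hi₀, (powersetCard_nonempty.2 hle).choose_spec⟩⟩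
  obtain ⟨⟨i, B⟩, hiB, hmax⟩ := exists_max_image _ (fun p => w p.1 + ∑ x ∈ p.2, x) hblocks
  obtain ⟨hi, hBL, hB⟩ := mem_sigma.1 hiB |>.imp_right mem_powersetCard.1
  exact ⟨i, hi, B, hBL, hB, fun j hj T hTL hT =>
    hmax ⟨j, T⟩ (mem_sigma.2 ⟨hj, mem_powersetCard.2 ⟨hTL, hT⟩⟩)⟩

variable [IsOrderedCancelAddMonoid α]

theorem weight_lt_of_forall_weight_le {s : Finset ι} {L B T : Finset α} {i j : ι}
    (hn : ∀ i ∈ s, n i ≠ 0) (hi : i ∈ s) (hj : j ∈ s) (hBL : B ⊆ L) (hB : B.card = n i)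
    (hmax : ∀ j ∈ s, ∀ T ⊆ L, T.card = n j → w j + ∑ x ∈ T, x ≤ w i + ∑ x ∈ B, x)
    (hTL : T ⊆ L \ B) (hT : T.card = n j) :
    w j + ∑ x ∈ T, x < w i + ∑ x ∈ B, x := by
  refine (hmax j hj T (hTL.trans sdiff_subset) hT).lt_of_ne fun heq => ?_
  have hBT : Disjoint B T := disjoint_sdiff.mono_right hTL
  have hBTL : B ∪ T ⊆ L := union_subset hBL (hTL.trans sdiff_subset)
  rcases exists_sum_lt_of_disjoint (card_ne_zero.1 (hB ▸ hn i hi))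
    (card_ne_zero.1 (hT ▸ hn j hj)) hBT with ⟨B', hB'L, hB', hlt⟩ | ⟨T', hT'L, hT', hlt⟩
  · exact (add_lt_add_right hlt (w i)).not_ge (hmax i hi B' (hB'L.trans hBTL) (hB'.trans hB))
  · refine (add_lt_add_right hlt (w j)).not_ge ?_
    exact heq ▸ hmax j hj T' (hT'L.trans hBTL) (hT'.trans hT)

theorem exists_partition_pairwise_weight_ne (s : Finset ι) (hn : ∀ i ∈ s, n i ≠ 0)
    (L : Finset α) (hL : L.card = ∑ i ∈ s, n i) :
    ∃ B : ι → Finset α, (∀ i ∈ s, (B i).card = n i) ∧ s.biUnion B = L ∧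
      (s : Set ι).Pairwise fun i j =>
        Disjoint (B i) (B j) ∧ w i + ∑ x ∈ B i, x ≠ w j + ∑ x ∈ B j, x := by
  classical
  induction s using Finset.strongInduction generalizing L with
  | H s ih =>
  rcases s.eq_empty_or_nonempty with rfl | ⟨i₀, hi₀⟩
  · exact ⟨fun _ => ∅, by simp, by simpa [eq_comm] using hL, by simp⟩
  obtain ⟨i, hi, B, hBL, hB, hmax⟩ := exists_forall_weight_le n w s L
    ⟨i₀, hi₀, hL ▸ single_le_sum (fun _ _ => Nat.zero_le _) hi₀⟩
  obtain ⟨B', hB', hB'L, hB'pair⟩ := ih (s.erase i) (erase_ssubset hi)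
    (fun j hj => hn j (mem_of_mem_erase hj)) (L \ B) (by
      rw [card_sdiff_of_subset hBL, hL, ← add_sum_erase s n hi, hB, Nat.add_sub_cancel_left])
  have hB'sub : ∀ j ∈ s.erase i, B' j ⊆ L \ B := fun j hj => hB'L ▸ subset_biUnion_of_mem B' hj
  refine ⟨Function.update B' i B, fun j hj => ?_, ?_, ?_⟩
  · rcases eq_or_ne j i with rfl | hji
    · simpa using hB
    · simpa [hji] using hB' j (mem_erase.2 ⟨hji, hj⟩)
  · have hupdate : ∀ j ∈ s.erase i, Function.update B' i B j = B' j :=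
      fun j hj => Function.update_of_ne (ne_of_mem_erase hj) _ _
    rw [← insert_erase hi, biUnion_insert, Function.update_self, biUnion_congr rfl hupdate, hB'L,
      union_sdiff_of_subset hBL]
  · rw [← insert_erase hi, coe_insert]
    refine Set.Pairwise.insert_of_notMem (by simp) ?_ fun j hj => ?_
    · intro j hj j' hj' hjj'
      simpa [ne_of_mem_erase hj, ne_of_mem_erase hj'] using hB'pair hj hj' hjj'
    · have hdisj : Disjoint B (B' j) := disjoint_sdiff.mono_right (hB'sub j hj)
      have hlt := weight_lt_of_forall_weight_le n w hn hi (mem_of_mem_erase hj) hBL hB hmax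
        (hB'sub j hj) (hB' j hj)
      simp only [Function.update_self, Function.update_of_ne (ne_of_mem_erase hj)]
      exact ⟨⟨hdisj, hlt.ne'⟩, hdisj.symm, hlt.ne⟩

end Blocks

theorem Set.BijOn.sigma {ι β α : Type*} {s : Set ι} {A : ι → Set β} {B : ι → Set α}
    {f : ι → β → α} (hf : ∀ i ∈ s, Set.BijOn (f i) (A i) (B i)) (hB : s.PairwiseDisjoint B) :
    Set.BijOn (fun x : Σ _ : ι, β => f x.1 x.2) (s.sigma A) (⋃ i ∈ s, B i) := by
  refine ⟨fun x hx => Set.mem_biUnion hx.1 ((hf x.1 hx.1).mapsTo hx.2), ?_, ?_⟩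
  · rintro ⟨i, u⟩ ⟨hi, hu⟩ ⟨j, v⟩ ⟨hj, hv⟩ (huv : f i u = f j v)
    obtain rfl : i = j := hB.elim hi hj <| Set.not_disjoint_iff.2
      ⟨f i u, (hf i hi).mapsTo hu, huv ▸ (hf j hj).mapsTo hv⟩
    rw [show u = v from (hf i hi).injOn hu hv huv]
  · intro y hy
    obtain ⟨i, hi, hy⟩ := Set.mem_iUnion₂.1 hy
    obtain ⟨u, hu, rfl⟩ := (hf i hi).surjOn hy
    exact ⟨⟨i, u⟩, ⟨hi, hu⟩, rfl⟩

theorem Set.InjOn.exists_bijOn_image {σ β γ : Type*} [Nonempty γ] {e : σ → β} {S : Set σ}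
    (he : Set.InjOn e S) {ℓ : σ → γ} {L : Set γ} (hℓ : Set.BijOn ℓ S L) :
    ∃ f : β → γ, Set.BijOn f (e '' S) L ∧ ∀ x ∈ S, f (e x) = ℓ x := by
  have hinj : Function.Injective (S.domRestrict e) := he.injective
  set f := Function.extend (S.domRestrict e) (S.domRestrict ℓ) fun _ => Classical.arbitrary γ
  have hf : ∀ x ∈ S, f (e x) = ℓ x := fun x hx => hinj.extend_apply _ _ ⟨x, hx⟩
  refine ⟨f, ⟨?_, ?_, ?_⟩, hf⟩
  · rintro _ ⟨x, hx, rfl⟩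
    exact hf x hx ▸ hℓ.mapsTo hx
  · rintro _ ⟨x, hx, rfl⟩ _ ⟨y, hy, rfl⟩ hxy
    rw [hf x hx, hf y hy] at hxy
    rw [hℓ.injOn hx hy hxy]
  · intro z hz
    obtain ⟨x, hx, rfl⟩ := hℓ.surjOn hz
    exact ⟨e x, Set.mem_image_of_mem e hx, hf x hx⟩

section Stars

variable {V : Type*} [DecidableEq V] {k : ℕ} {c : Fin k → V} {A : Fin k → Finset V}

theorem injOn_starEdge (hc : ∀ i, c i ∉ A i)
    (hdisj : ∀ i j : Fin k, i ≠ j → Disjoint (insert (c i) (A i)) (insert (c j) (A j))) :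
    Set.InjOn (fun x : Σ _ : Fin k, V => s(c x.1, x.2)) (univ.sigma A : Finset _) := by
  have hcentre : ∀ i j u, u ∈ insert (c j) (A j) → c i = u → i = j := fun i j u hu hiu =>
    by_contra fun hij => disjoint_left.1 (hdisj i j hij) (mem_insert_self _ _) (hiu ▸ hu)
  rintro ⟨i, u⟩ hu ⟨j, v⟩ hv huv
  simp only [coe_sigma, coe_univ, Set.mem_sigma_iff, Set.mem_univ, mem_coe, true_and] at hu hv
  rcases Sym2.eq_iff.1 huv with ⟨hij, rfl⟩ | ⟨hiv, hju⟩
  · obtain rfl := hcentre i j _ (mem_insert_self _ _) hij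
    rfl
  · obtain rfl := hcentre i j v (mem_insert_of_mem hv) hiv
    exact absurd (hiv ▸ hv) (hc i)

theorem starEdges_eq_image :
    starEdges k c A = (univ.sigma A).image fun x => s(c x.1, x.2) := by
  ext e
  simp [starEdges]

theorem card_starEdges (hc : ∀ i, c i ∉ A i)
    (hdisj : ∀ i j : Fin k, i ≠ j → Disjoint (insert (c i) (A i)) (insert (c j) (A j))) :
    (starEdges k c A).card = ∑ i, (A i).card := by
  rw [starEdges_eq_image, card_image_of_injOn (injOn_starEdge hc hdisj), card_sigma]

end Stars

/-- Given vertex-disjoint stars `S₁, …, S_k` with centres `c₁, …, c_k` and a label set `L` of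
size `|⋃ E(Sᵢ)|`, for any `g` there is a bijective labelling of the edges by `L` such that the
sums at the centres are pairwise distinct. -/
theorem statement16 {V : Type*} [DecidableEq V] (k : ℕ) (c : Fin k → V) (A : Fin k → Finset V)
    (hA : ∀ i, (A i).Nonempty) (hc : ∀ i, c i ∉ A i)
    (hdisj : ∀ i j : Fin k, i ≠ j → Disjoint (insert (c i) (A i)) (insert (c j) (A j)))
    (L : Finset ℤ) (hL : L.card = (starEdges k c A).card) (g : V → ℕ) :
    ∃ f : Sym2 V → ℤ,
      Set.BijOn f ↑(starEdges k c A) ↑L ∧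
      ∀ i j : Fin k, i ≠ j →
        (g (c i) : ℤ) + ∑ v ∈ A i, f s(c i, v) ≠
          (g (c j) : ℤ) + ∑ v ∈ A j, f s(c j, v) := by
  obtain ⟨B, hBcard, hBL, hBpair⟩ := exists_partition_pairwise_weight_ne (fun i => (A i).card)
    (fun i => (g (c i) : ℤ)) univ (fun i _ => (hA i).card_pos.ne') L
    (hL.trans (card_starEdges hc hdisj))
  choose ℓ hℓ using fun i => (A i).finite_toSet.exists_bijOn_of_encard_eq (t := (B i : Set ℤ))
    (by simp [Set.encard_coe_eq_coe_finsetCard, hBcard i (mem_univ i)])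
  have hσ : Set.BijOn (fun x : Σ _ : Fin k, V => ℓ x.1 x.2) (univ.sigma A : Finset _) L := by
    have := Set.BijOn.sigma (s := ↑(univ : Finset (Fin k))) (fun i _ => hℓ i)
      fun i hi j hj hij => disjoint_coe.2 (hBpair hi hj hij).1
    simpa [← hBL] using this
  obtain ⟨f, hf, hfℓ⟩ := (injOn_starEdge hc hdisj).exists_bijOn_image hσ
  have hsum : ∀ i, ∑ v ∈ A i, f s(c i, v) = ∑ x ∈ B i, x := fun i =>
    (sum_congr rfl fun v hv => hfℓ ⟨i, v⟩ (by simpa using hv)).trans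
      (sum_nbij (ℓ i) (hℓ i).mapsTo (hℓ i).injOn (hℓ i).surjOn fun _ _ => rfl)
  refine ⟨f, by rwa [starEdges_eq_image, coe_image], fun i j hij => ?_⟩
  rw [hsum i, hsum j]
  exact (hBpair (mem_coe.2 (mem_univ i)) (mem_coe.2 (mem_univ j)) hij).2
end
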